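/- Let f be the local rule of ECA rule 184 and f̂ its block evolution operator. For every n ≥ 0, a binary word b = b_1 b_2 … b_{2n+2} belongs to f̂^{−n}(00) if and only if b_1 = 0, b_2 = 0, and 2 + Σ_{i=3}^{k} ξ(b_i) > 0 for every k with 3 ≤ k ≤ 2n+2, where ξ(0) = 1 and ξ(1) = −1. -/
import Mathlib


/-- The local rule of ECA rule 184: `f(x1,x2,x3) = x1` if `x2 = 0`, and `x3` if `x2 = 1`. -/
def rule184 (x1 x2 x3 : Bool) : Bool := if x2 then x3 else x1

/-- The block evolution operator of the local rule `f`. -/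
def blockOp (f : Bool → Bool → Bool → Bool) (a : List Bool) : List Bool :=
  (List.range (a.length - 2)).map fun i =>
    f (a.getD i false) (a.getD (i + 1) false) (a.getD (i + 2) false)

def xi (x : Bool) : ℤ := if x then -1 else 1
def T (b : List Bool) (k : ℕ) : ℤ := ∑ i ∈ Finset.range k, xi (b.getD i false)
def Ind (b : List Bool) (j : ℕ) : ℤ :=
  if b.getD j false = true ∧ b.getD (j+1) false = false then 1 else 0
def Cond (b : List Bool) : Prop :=
  b.getD 0 false = false ∧ b.getD 1 false = false ∧
    ∀ k, 1 ≤ k → k ≤ b.length → 0 < T b k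

lemma blockOp_length (f) (a : List Bool) : (blockOp f a).length = a.length - 2 := by
  simp [blockOp]

lemma blockOp_getD (f) (a : List Bool) (j : ℕ) (hj : j < a.length - 2) :
    (blockOp f a).getD j false = f (a.getD j false) (a.getD (j+1) false) (a.getD (j+2) false) := by
  rw [blockOp, List.getD_eq_getElem]
  · simp
  · simpa using hj

lemma xi_rule (x y z : Bool) :
    xi (rule184 x y z) = xi y + 2*(if y = true ∧ z = false then (1:ℤ) else 0)
      - 2*(if x = true ∧ y = false then (1:ℤ) else 0) := by
  cases x <;> cases y <;> cases z <;> simp [xi, rule184]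

lemma T_zero (b : List Bool) : T b 0 = 0 := by simp [T]

lemma T_succ (b : List Bool) (k : ℕ) : T b (k+1) = T b k + xi (b.getD k false) := by
  simp [T, Finset.sum_range_succ]

lemma xi_cases (x : Bool) : xi x = 1 ∨ xi x = -1 := by cases x <;> simp [xi]

lemma xi_eq_neg_one {x : Bool} (h : xi x = -1) : x = true := by
  cases x <;> simp_all [xi]

lemma xi_eq_one {x : Bool} (h : xi x = 1) : x = false := by
  cases x <;> simp_all [xi]

lemma xi_true : xi true = -1 := rfl
lemma xi_false : xi false = 1 := rfl

lemma Ind_cases (b : List Bool) (j : ℕ) : Ind b j = 0 ∨ Ind b j = 1 := by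
  unfold Ind; split <;> simp

lemma Ind_eq_one {b : List Bool} {j : ℕ} (h : Ind b j = 1) :
    b.getD j false = true ∧ b.getD (j+1) false = false := by
  unfold Ind at h; split at h
  · assumption
  · norm_num at h

lemma Ind_of_snd_true {b : List Bool} {j : ℕ} (h : b.getD (j+1) false = true) :
    Ind b j = 0 := by
  unfold Ind; split
  · simp_all
  · rfl

lemma Ind_of_fst_false {b : List Bool} {j : ℕ} (h : b.getD j false = false) :
    Ind b j = 0 := by
  unfold Ind; split
  · simp_all
  · rfl

lemma T_parity (b : List Bool) (k : ℕ) : Even (T b k + k) := by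
  induction k with
  | zero => simp [T]
  | succ k ih =>
    rw [T_succ]
    rcases xi_cases (b.getD k false) with h | h <;> rw [h] <;> push_cast
    · rw [show T b k + 1 + ((k:ℤ)+1) = (T b k + k) + 2 by ring]
      exact ih.add (by decide)
    · rw [show T b k + -1 + ((k:ℤ)+1) = (T b k + k) by ring]
      exact ih

lemma T_blockOp (b : List Bool) (k : ℕ) (hk : k ≤ b.length - 2) :
    T (blockOp rule184 b) k = T b (k+1) - xi (b.getD 0 false) + 2 * Ind b k - 2 * Ind b 0 := by
  have h1 : T (blockOp rule184 b) k
      = ∑ j ∈ Finset.range k, (xi (b.getD (j+1) false) + (2*Ind b (j+1) - 2*Ind b j)) := by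
    apply Finset.sum_congr rfl
    intro j hj
    rw [blockOp_getD _ _ _ (lt_of_lt_of_le (Finset.mem_range.mp hj) hk), xi_rule]
    simp [Ind]; ring
  rw [h1, Finset.sum_add_distrib, Finset.sum_range_sub (fun j => 2 * Ind b j)]
  have h2 : ∑ j ∈ Finset.range k, xi (b.getD (j+1) false) = T b (k+1) - xi (b.getD 0 false) := by
    have := Finset.sum_range_succ' (fun i => xi (b.getD i false)) k
    rw [T]; omega
  rw [h2]; ring

lemma Cond_iff (m : ℕ) (hm : 2 ≤ m) (hme : Even m) (b : List Bool) (hb : b.length = m + 2) :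
    Cond b ↔ Cond (blockOp rule184 b) := by
  set c := blockOp rule184 b with hc
  have hcl : c.length = m := by rw [hc, blockOp_length, hb]; omega
  have hgd : ∀ j, j < m → c.getD j false
      = rule184 (b.getD j false) (b.getD (j+1) false) (b.getD (j+2) false) := by
    intro j hj
    exact blockOp_getD _ _ _ (by omega)
  constructor
  · rintro ⟨h0, h1, hpos⟩
    have hT : ∀ k, k ≤ m → T c k = T b (k+1) - 1 + 2 * Ind b k := by
      intro k hk
      rw [hc, T_blockOp b k (by omega), h0, Ind_of_fst_false h0, xi_false]; ring
    have hT1 : T b 1 = 1 := by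
      have e : T b 1 = T b 0 + xi (b.getD 0 false) := T_succ b 0
      rw [T_zero, h0, xi_false] at e; omega
    have hT2 : T b 2 = 2 := by
      have e : T b 2 = T b 1 + xi (b.getD 1 false) := T_succ b 1
      rw [hT1, h1, xi_false] at e; omega
    refine ⟨?_, ?_, ?_⟩
    · rw [hgd 0 (by omega), rule184, show (0:ℕ)+1 = 1 from rfl, h1,
        if_neg (show ¬(false = true) by decide)]
      exact h0
    · rw [hgd 1 (by omega), rule184, show (1:ℕ)+1 = 2 from rfl, show (1:ℕ)+2 = 3 from rfl]
      rcases hb2 : b.getD 2 false with _ | _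
      · rw [if_neg (show ¬(false = true) by decide)]; exact h1
      · rw [if_pos rfl]
        by_contra hb3
        rw [Bool.not_eq_false] at hb3
        have e3 : T b 3 = T b 2 + xi (b.getD 2 false) := T_succ b 2
        have e4 : T b 4 = T b 3 + xi (b.getD 3 false) := T_succ b 3
        rw [hb2, xi_true] at e3
        rw [hb3, xi_true] at e4
        have := hpos 4 (by omega) (by omega)
        omega
    · intro k hk1 hk2
      rw [hcl] at hk2
      rw [hT k hk2]
      have hp1 : 0 < T b (k+1) := hpos (k+1) (by omega) (by omega)
      rcases Ind_cases b k with hI | hI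
      · rw [hI]
        by_contra hcon
        push_neg at hcon
        have hTk1 : T b (k+1) = 1 := by omega
        have hbk : b.getD k false = true := by
          have hTk : 0 < T b k := hpos k (by omega) (by omega)
          have hTs : T b (k+1) = T b k + xi (b.getD k false) := T_succ b k
          rcases xi_cases (b.getD k false) with h | h
          · rw [h] at hTs; omega
          · exact xi_eq_neg_one h
        have hbk1 : b.getD (k+1) false = false := by
          have h2 : T b (k+2) = T b (k+1) + xi (b.getD (k+1) false) := T_succ b (k+1)
          have := hpos (k+2) (by omega) (by omega)
          rcases xi_cases (b.getD (k+1) false) with h | h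
          · exact xi_eq_one h
          · rw [h] at h2; omega
        have : Ind b k = 1 := by unfold Ind; rw [if_pos ⟨hbk, hbk1⟩]
        omega
      · rw [hI]; omega
  · rintro ⟨hc0, hc1, hcpos⟩
    rw [hgd 0 (by omega), rule184, show (0:ℕ)+1 = 1 from rfl, show (0:ℕ)+2 = 2 from rfl] at hc0
    rw [hgd 1 (by omega), rule184, show (1:ℕ)+1 = 2 from rfl, show (1:ℕ)+2 = 3 from rfl] at hc1
    have h1 : b.getD 1 false = false := by
      by_contra h
      rw [Bool.not_eq_false] at h
      rw [h, if_pos rfl] at hc0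
      rw [hc0, if_neg (show ¬(false = true) by decide)] at hc1
      rw [h] at hc1
      exact Bool.noConfusion hc1
    have h0 : b.getD 0 false = false := by
      rw [h1, if_neg (show ¬(false = true) by decide)] at hc0
      exact hc0
    have hT : ∀ k, k ≤ m → T c k = T b (k+1) - 1 + 2 * Ind b k := by
      intro k hk
      rw [hc, T_blockOp b k (by omega), h0, Ind_of_fst_false h0, xi_false]; ring
    have hT1 : T b 1 = 1 := by
      have e : T b 1 = T b 0 + xi (b.getD 0 false) := T_succ b 0
      rw [T_zero, h0, xi_false] at e; omega
    have hT2 : T b 2 = 2 := by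
      have e : T b 2 = T b 1 + xi (b.getD 1 false) := T_succ b 1
      rw [hT1, h1, xi_false] at e; omega
    refine ⟨h0, h1, ?_⟩
    intro k hk1 hk2
    rw [hb] at hk2
    induction k using Nat.strong_induction_on with
    | _ k ih =>
    match k, hk1 with
    | 1, _ => rw [hT1]; norm_num
    | 2, _ => rw [hT2]; norm_num
    | (j+3), _ =>
      have hTj : 0 < T b (j+2) := ih (j+2) (by omega) (by omega) (by omega)
      by_contra hcon
      push_neg at hcon
      have hcon' : T b ((j+2)+1) ≤ 0 := hcon
      have hTsucc : T b ((j+2)+1) = T b (j+2) + xi (b.getD (j+2) false) := T_succ b (j+2)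
      have hxj : xi (b.getD (j+2) false) = -1 := by
        rcases xi_cases (b.getD (j+2) false) with h | h
        · rw [h] at hTsucc; omega
        · exact h
      have hbj : b.getD (j+2) false = true := xi_eq_neg_one hxj
      have hTj1 : T b (j+2) = 1 := by omega
      have hT0 : T b ((j+2)+1) = 0 := by omega
      by_cases hjm : j + 2 ≤ m
      · have hTcj := hT (j+2) hjm
        have hcp := hcpos (j+2) (by omega) (by omega)
        rcases Ind_cases b (j+2) with hI | hI
        · rw [hI, hT0] at hTcj; omega
        · obtain ⟨_, hbj1⟩ := Ind_eq_one hI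
          rw [hI, hT0] at hTcj
          by_cases hjm2 : j + 3 ≤ m
          · have hTcj1 : T c (j+3) = T b ((j+3)+1) - 1 + 2 * Ind b (j+3) := hT (j+3) hjm2
            have hTb2 : T b ((j+3)+1) = T b ((j+2)+1) + xi (b.getD ((j+2)+1) false) :=
              T_succ b ((j+2)+1)
            rw [hT0] at hTb2
            have hbj1' : b.getD (j+3) false = false := hbj1
            rw [hbj1', xi_false] at hTb2
            have hI3 : Ind b (j+3) = 0 := Ind_of_fst_false hbj1'
            rw [hI3, hTb2] at hTcj1
            have := hcpos (j+3) (by omega) (by omega)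
            omega
          · have hjm3 : j + 2 = m := by omega
            have hpar := T_parity c (j+2)
            rw [hTcj] at hpar
            obtain ⟨r, hr⟩ := hpar
            obtain ⟨s, hs⟩ := hme
            omega
      · have hjm3 : j + 2 = m + 1 := by omega
        have hTcm := hT m (le_refl m)
        have hbm1 : b.getD (m+1) false = true := by rw [← hjm3]; exact hbj
        have hIm : Ind b m = 0 := Ind_of_snd_true hbm1
        have hTm1 : T b (m+1) = 1 := by rw [← hjm3]; exact hTj1
        rw [hIm, hTm1] at hTcm
        have := hcpos m (by omega) (by omega)
        omega

lemma xi_eq_if (x : Bool) : (if x = true then (-1:ℤ) else 1) = xi x := by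
  cases x <;> simp [xi]

lemma bridge (b : List Bool) (h0 : b.getD 0 false = false) (h1 : b.getD 1 false = false)
    (k : ℕ) (hk : 2 ≤ k) :
    2 + ∑ i ∈ Finset.Icc 2 k, (if b.getD i false = true then (-1 : ℤ) else 1) = T b (k+1) := by
  have e1 : ∑ i ∈ Finset.Icc 2 k, (if b.getD i false = true then (-1 : ℤ) else 1)
      = ∑ i ∈ Finset.Ico 2 (k+1), xi (b.getD i false) := by
    rw [Finset.Ico_add_one_right_eq_Icc]
    exact Finset.sum_congr rfl fun i _ => xi_eq_if _
  rw [e1, T, Finset.range_eq_Ico,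
    ← Finset.sum_Ico_consecutive _ (by omega : 0 ≤ 2) (by omega : 2 ≤ k+1)]
  have e2 : ∑ i ∈ Finset.Ico 0 2, xi (b.getD i false) = 2 := by
    rw [← Finset.range_eq_Ico, Finset.sum_range_succ, Finset.sum_range_succ,
      Finset.sum_range_zero, h0, h1, xi_false]
    ring
  rw [e2]

lemma iterate_iff (n : ℕ) : ∀ b : List Bool, b.length = 2*n+2 →
    ((blockOp rule184)^[n] b = [false, false] ↔ Cond b) := by
  induction n with
  | zero =>
    intro b hb
    match b, hb with
    | [x, y], _ =>
      simp only [Function.iterate_zero, id]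
      constructor
      · intro h
        injection h with e1 h'
        injection h' with e2 _
        subst e1; subst e2
        refine ⟨rfl, rfl, ?_⟩
        intro k hk1 hk2
        simp only [List.length_cons, List.length_nil] at hk2
        interval_cases k
        · have e : T [false, false] 1 = T [false, false] 0 + xi ([false, false].getD 0 false) :=
            T_succ _ 0
          rw [T_zero] at e
          rw [e]; norm_num [xi]
        · have e1 : T [false, false] 1 = T [false, false] 0 + xi ([false, false].getD 0 false) :=
            T_succ _ 0
          have e2 : T [false, false] 2 = T [false, false] 1 + xi ([false, false].getD 1 false) :=
            T_succ _ 1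
          rw [T_zero] at e1
          rw [e2, e1]; norm_num [xi]
      · rintro ⟨e0, e1, _⟩
        simp only [List.getD_cons_zero, List.getD_cons_succ] at e0 e1
        subst e0; subst e1; rfl
  | succ n ih =>
    intro b hb
    rw [Function.iterate_succ_apply]
    have hcb : (blockOp rule184 b).length = 2*n+2 := by rw [blockOp_length]; omega
    rw [ih (blockOp rule184 b) hcb]
    exact (Cond_iff (2*n+2) (by omega) ⟨n+1, by ring⟩ b (by omega)).symm

/-- The set `f̂⁻ⁿ(a)` of `n`-step preimages of the word `a` under the block
evolution operator of `f`. -/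
def preimSet (f : Bool → Bool → Bool → Bool) (n : ℕ) (a : List Bool) : Set (List Bool) :=
  {b | b.length = a.length + 2 * n ∧ (blockOp f)^[n] b = a}

/-- a word `b = b_0 b_1 … b_{2n+1}` (0-indexed, length `2n+2`) is an
`n`-step preimage of `00` under rule 184 iff `b_0 = 0`, `b_1 = 0`, and all partial sums
`2 + ∑_{i=2}^{k} ξ(b_i)` (for `2 ≤ k ≤ 2n+1`) are positive, where `ξ(0) = 1, ξ(1) = −1`. -/
theorem rule184_preimages_of_00 (n : ℕ) (b : List Bool) (hb : b.length = 2 * n + 2) :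
    b ∈ preimSet rule184 n [false, false] ↔
      b.getD 0 false = false ∧ b.getD 1 false = false ∧
        ∀ k : ℕ, 2 ≤ k → k ≤ 2 * n + 1 →
          0 < 2 + ∑ i ∈ Finset.Icc 2 k, (if b.getD i false = true then (-1 : ℤ) else 1) := by
  have hmem : b ∈ preimSet rule184 n [false, false] ↔ (blockOp rule184)^[n] b = [false, false] := by
    constructor
    · exact fun h => h.2
    · exact fun h => ⟨by simpa using (by omega : b.length = 2 + 2*n), h⟩
  rw [hmem, iterate_iff n b hb]
  constructor
  · rintro ⟨h0, h1, hpos⟩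
    refine ⟨h0, h1, ?_⟩
    intro k hk1 hk2
    rw [bridge b h0 h1 k hk1]
    exact hpos (k+1) (by omega) (by omega)
  · rintro ⟨h0, h1, hs⟩
    refine ⟨h0, h1, ?_⟩
    intro k hk1 hk2
    rw [hb] at hk2
    match k, hk1 with
    | 1, _ =>
      have e : T b 1 = T b 0 + xi (b.getD 0 false) := T_succ b 0
      rw [T_zero, h0, xi_false] at e; omega
    | 2, _ =>
      have e1 : T b 1 = T b 0 + xi (b.getD 0 false) := T_succ b 0
      have e2 : T b 2 = T b 1 + xi (b.getD 1 false) := T_succ b 1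
      rw [T_zero, h0, xi_false] at e1
      rw [h1, xi_false] at e2
      omega
    | (j+3), _ =>
      have hbr : 2 + ∑ i ∈ Finset.Icc 2 (j+2), (if b.getD i false = true then (-1 : ℤ) else 1)
          = T b ((j+2)+1) := bridge b h0 h1 (j+2) (by omega)
      have := hs (j+2) (by omega) (by omega)
      have hgoal : (0:ℤ) < T b ((j+2)+1) := by omega
      exact hgoal
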